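/- Let m, n ≥ 3. If A is a 312-avoiding m×n (0,1)-matrix, then the number of 1's of A is at most 2(m + n − 2). -/

import Mathlib

/-- Number of 1's of an `m × n` (0,1)-matrix `A` (1-indexed entries). -/
def onesCount (m n : ℕ) (A : ℕ → ℕ → Bool) : ℕ :=
  (((Finset.Icc 1 m) ×ˢ (Finset.Icc 1 n)).filter fun p => A p.1 p.2 = true).card

/-- `A` is 312-avoiding. -/
def Avoid312 (m n : ℕ) (A : ℕ → ℕ → Bool) : Prop :=
  ¬ ∃ r₁ r₂ r₃ c₁ c₂ c₃ : ℕ,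
    1 ≤ r₁ ∧ r₁ < r₂ ∧ r₂ < r₃ ∧ r₃ ≤ m ∧
    1 ≤ c₁ ∧ c₁ < c₂ ∧ c₂ < c₃ ∧ c₃ ≤ n ∧
    A r₁ c₃ = true ∧ A r₂ c₁ = true ∧ A r₃ c₂ = true

/-!
Split the ones of `A` into those that are the first one of their row, those that are the last
one of their column, and the remaining "interior" ones. A first-of-row one in the last row is
also last in its column, so the first two kinds number at most `(m - 1) + n`. An interior one
`(i, j)` has a one to its left and a one below it; together with a one strictly above and to the
right of `(i, j)` these would form a 312. Hence no two interior ones lie on a common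
antidiagonal, and since interior ones avoid the first column and the last row, the antidiagonal
index `i + j` ranges over `3, …, m + n - 1`: there are at most `m + n - 3` interior ones.
-/

open Finset

def onesSet (m n : ℕ) (A : ℕ → ℕ → Bool) : Finset (ℕ × ℕ) :=
  (Icc 1 m ×ˢ Icc 1 n).filter fun p => A p.1 p.2 = true

def rowFirsts (m n : ℕ) (A : ℕ → ℕ → Bool) : Finset (ℕ × ℕ) :=
  (onesSet m n A).filter fun p => ∀ q ∈ onesSet m n A, q.1 = p.1 → p.2 ≤ q.2

def columnLasts (m n : ℕ) (A : ℕ → ℕ → Bool) : Finset (ℕ × ℕ) :=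
  (onesSet m n A).filter fun p => ∀ q ∈ onesSet m n A, q.2 = p.2 → q.1 ≤ p.1

def interiorOnes (m n : ℕ) (A : ℕ → ℕ → Bool) : Finset (ℕ × ℕ) :=
  onesSet m n A \ (rowFirsts m n A ∪ columnLasts m n A)

section

variable {m n : ℕ} {A : ℕ → ℕ → Bool}

theorem mem_onesSet {p : ℕ × ℕ} :
    p ∈ onesSet m n A ↔ (1 ≤ p.1 ∧ p.1 ≤ m) ∧ (1 ≤ p.2 ∧ p.2 ≤ n) ∧ A p.1 p.2 = true := by
  simp only [onesSet, mem_filter, mem_product, mem_Icc, and_assoc]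

theorem mem_interiorOnes {p : ℕ × ℕ} :
    p ∈ interiorOnes m n A ↔ p ∈ onesSet m n A ∧
      (∃ q ∈ onesSet m n A, q.1 = p.1 ∧ q.2 < p.2) ∧
      (∃ q ∈ onesSet m n A, q.2 = p.2 ∧ p.1 < q.1) := by
  simp only [interiorOnes, rowFirsts, columnLasts, mem_sdiff, mem_union, mem_filter, not_or,
    not_and, not_forall, not_le, exists_prop]
  tauto

theorem card_onesSet_eq :
    #(onesSet m n A) = #(rowFirsts m n A ∪ columnLasts m n A) + #(interiorOnes m n A) := by
  rw [interiorOnes, add_comm, card_sdiff_add_card_eq_card]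
  exact union_subset (filter_subset _ _) (filter_subset _ _)

theorem card_rowFirsts_filter_lt_le : #((rowFirsts m n A).filter (·.1 < m)) ≤ m - 1 := by
  calc #((rowFirsts m n A).filter (·.1 < m)) ≤ #(Icc 1 (m - 1)) := by
        refine card_le_card_of_injOn Prod.fst (fun p hp => ?_) (fun p hp p' hp' h => ?_)
        · simp only [mem_coe, rowFirsts, mem_filter] at hp
          obtain ⟨⟨hp, -⟩, hpm⟩ := hp
          have := (mem_onesSet.1 hp).1
          simp only [coe_Icc, Set.mem_Icc]
          omega
        · simp only [mem_coe, rowFirsts, mem_filter] at hp hp'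
          obtain ⟨⟨hp, hfirst⟩, -⟩ := hp
          obtain ⟨⟨hp', hfirst'⟩, -⟩ := hp'
          exact Prod.ext h (le_antisymm (hfirst p' hp' h.symm) (hfirst' p hp h))
    _ = m - 1 := by simp

theorem card_columnLasts_le : #(columnLasts m n A) ≤ n := by
  calc #(columnLasts m n A) ≤ #(Icc 1 n) := by
        refine card_le_card_of_injOn Prod.snd (fun p hp => ?_) (fun p hp p' hp' h => ?_)
        · have := (mem_onesSet.1 (mem_filter.1 hp).1).2.1
          simpa using this
        · obtain ⟨hp, hlast⟩ := mem_filter.1 hp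
          obtain ⟨hp', hlast'⟩ := mem_filter.1 hp'
          exact Prod.ext (le_antisymm (hlast' p hp h) (hlast p' hp' h.symm)) h
    _ = n := by simp

theorem card_rowFirsts_union_columnLasts_le :
    #(rowFirsts m n A ∪ columnLasts m n A) ≤ m - 1 + n := by
  have hsub : rowFirsts m n A ∪ columnLasts m n A ⊆
      (rowFirsts m n A).filter (·.1 < m) ∪ columnLasts m n A := by
    intro p hp
    rcases mem_union.1 hp with hfirst | hlast
    · by_cases hpm : p.1 < m
      · exact mem_union_left _ (mem_filter.2 ⟨hfirst, hpm⟩)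
      · have hp := (mem_filter.1 hfirst).1
        refine mem_union_right _ (mem_filter.2 ⟨hp, fun q hq _ => ?_⟩)
        have := (mem_onesSet.1 hq).1.2
        omega
    · exact mem_union_right _ hlast
  calc _ ≤ _ := card_le_card hsub
    _ ≤ _ := card_union_le _ _
    _ ≤ m - 1 + n := add_le_add card_rowFirsts_filter_lt_le card_columnLasts_le

theorem Avoid312.snd_le_of_mem_interiorOnes (hA : Avoid312 m n A) {p q : ℕ × ℕ}
    (hp : p ∈ interiorOnes m n A) (hq : q ∈ onesSet m n A) (hqp : q.1 < p.1) : q.2 ≤ p.2 := by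
  obtain ⟨-, ⟨l, hl, hlp, hlj⟩, ⟨b, hb, hbp, hib⟩⟩ := mem_interiorOnes.1 hp
  rw [mem_onesSet, hlp] at hl
  rw [mem_onesSet, hbp] at hb
  rw [mem_onesSet] at hq
  by_contra! hpq
  exact hA ⟨q.1, p.1, b.1, l.2, p.2, q.2, hq.1.1, hqp, hib, hb.1.2, hl.2.1.1, hlj, hpq, hq.2.1.2,
    hq.2.2, hl.2.2, hb.2.2⟩

theorem Avoid312.card_interiorOnes_le (hA : Avoid312 m n A) :
    #(interiorOnes m n A) ≤ m + n - 3 := by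
  calc #(interiorOnes m n A) ≤ #(Icc 3 (m + n - 1)) := by
        refine card_le_card_of_injOn (fun p => p.1 + p.2) (fun p hp => ?_)
          (fun p hp p' hp' h => ?_)
        · obtain ⟨hp, ⟨q, hq, -, hqp⟩, ⟨q', hq', -, hpq'⟩⟩ := mem_interiorOnes.1 hp
          have := mem_onesSet.1 hp
          have := mem_onesSet.1 hq
          have := mem_onesSet.1 hq'
          simp only [coe_Icc, Set.mem_Icc]
          omega
        · have h₁ := fun hlt => hA.snd_le_of_mem_interiorOnes hp' (mem_sdiff.1 hp).1 hlt
          have h₂ := fun hlt => hA.snd_le_of_mem_interiorOnes hp (mem_sdiff.1 hp').1 hlt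
          simp only at h
          exact Prod.ext (by omega) (by omega)
    _ = m + n - 3 := by rw [Nat.card_Icc]; omega

theorem Avoid312.card_onesSet_le (hA : Avoid312 m n A) :
    #(onesSet m n A) ≤ (m - 1 + n) + (m + n - 3) :=
  card_onesSet_eq.trans_le
    (add_le_add card_rowFirsts_union_columnLasts_le hA.card_interiorOnes_le)

end

theorem stmt_13_general (m n : ℕ) (hm : 3 ≤ m) (A : ℕ → ℕ → Bool)
    (hA : Avoid312 m n A) : onesCount m n A ≤ 2 * (m + n - 2) := by
  have hcount : onesCount m n A = #(onesSet m n A) := rfl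
  have := hA.card_onesSet_le
  omega

theorem stmt_13 (m n : ℕ) (hm : 3 ≤ m) (hn : 3 ≤ n) (A : ℕ → ℕ → Bool)
    (hA : Avoid312 m n A) : onesCount m n A ≤ 2 * (m + n - 2) :=
  stmt_13_general m n hm A hA
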